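/- arXiv:1503.04994 — 8 statements merged into one kernel-verified Lean document; each statement's English description precedes it below -/
import Mathlib

section
/- Antisymmetry of the dominator relation: Let A and B be two distinct dominators of a vertex u (with respect to root). If B dominates A, then A does not dominate B. -/
/-- A nonempty directed path `p` from `a` to `b` in the graph with edge relation `E`. -/
def IsPath {V : Type*} (E : V → V → Prop) (p : List V) (a b : V) : Prop :=
  p ≠ [] ∧ p.head? = some a ∧ p.getLast? = some b ∧ p.Chain' E

/-- `A` dominates `B` with respect to `root`: every path from a vertex of `B` to `root`
contains a vertex of `A`. -/
def Dominates {V : Type*} (E : V → V → Prop) (root : V) (A B : Set V) : Prop :=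
  ∀ b ∈ B, ∀ p : List V, IsPath E p b root → ∃ a ∈ A, a ∈ p

/-- `A` is a dominator of `B`: it dominates `B` and no proper subset `A \ {v}` does. -/
def IsDominator {V : Type*} (E : V → V → Prop) (root : V) (A B : Set V) : Prop :=
  Dominates E root A B ∧ ∀ v ∈ A, ¬ Dominates E root (A \ {v}) B

/-- `{v, w}` is a double-vertex dominator of `u`. -/
def DoubleDom {V : Type*} (E : V → V → Prop) (root : V) (u v w : V) : Prop :=
  v ≠ w ∧ Dominates E root {v, w} {u} ∧
    ¬ Dominates E root {v} {u} ∧ ¬ Dominates E root {w} {u}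

/-- The edge relation `E` is acyclic. -/
def Acyclic {V : Type*} (E : V → V → Prop) : Prop :=
  ∀ a b, E a b → ¬ Relation.ReflTransGen E b a

/-!
If `A` and `B` dominate each other and `A` is a dominator of `u`, then `A ⊆ B`; by symmetry
`A = B`. For `v ∈ A`, minimality of `A` yields a path from `u` to `root` meeting `A` only in `v`.
Its suffix starting at the last occurrence of `v` meets some `b ∈ B`, and the suffix from `b`
meets `A`, necessarily in `v`; as `v` does not occur after the head of the first suffix, `b = v`.
-/

section

variable {V : Type*} {E : V → V → Prop} {root : V}

theorem IsPath.exists_suffix_notMem_tail {p : List V} {a x : V} (hp : IsPath E p a root)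
    (hx : x ∈ p) : ∃ q, q <:+ p ∧ IsPath E q x root ∧ x ∉ q.tail := by
  induction p generalizing a with
  | nil => exact absurd rfl hp.1
  | cons y t ih =>
    obtain ⟨-, -, hlast, hchain⟩ := hp
    by_cases hxt : x ∈ t
    · obtain ⟨z, t', rfl⟩ := List.exists_cons_of_ne_nil (List.ne_nil_of_mem hxt)
      have ht : IsPath E (z :: t') z root :=
        ⟨List.cons_ne_nil z t', rfl, List.getLast?_cons_cons ▸ hlast, hchain.tail⟩
      obtain ⟨q, hq, hqpath, hqx⟩ := ih ht hxt
      exact ⟨q, hq.trans (List.suffix_cons y _), hqpath, hqx⟩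
    · obtain rfl : x = y := (List.mem_cons.mp hx).resolve_right hxt
      exact ⟨x :: t, List.suffix_refl _, ⟨List.cons_ne_nil x t, rfl, hlast, hchain⟩, hxt⟩

theorem IsPath.exists_suffix {p : List V} {a x : V} (hp : IsPath E p a root) (hx : x ∈ p) :
    ∃ q, q <:+ p ∧ IsPath E q x root :=
  let ⟨q, hq, hqpath, _⟩ := hp.exists_suffix_notMem_tail hx
  ⟨q, hq, hqpath⟩

theorem IsPath.eq_of_suffix_of_mem {q r : List V} {x b : V} (hq : IsPath E q x root)
    (hxq : x ∉ q.tail) (hr : IsPath E r b root) (hrq : r <:+ q) (hxr : x ∈ r) : b = x := by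
  obtain ⟨t, rfl⟩ : ∃ t, q = x :: t := by
    obtain ⟨y, t, rfl⟩ := List.exists_cons_of_ne_nil hq.1
    exact ⟨t, by cases hq.2.1; rfl⟩
  rcases List.suffix_cons_iff.mp hrq with rfl | hrt
  · simpa using hr.2.1.symm
  · exact absurd (hrt.subset hxr) hxq

theorem IsDominator.subset_of_dominates {A B C : Set V} (hA : IsDominator E root A C)
    (hBA : Dominates E root B A) (hAB : Dominates E root A B) : A ⊆ B := by
  intro v hv
  obtain ⟨c, hc, p, hp, hpA⟩ : ∃ c ∈ C, ∃ p, IsPath E p c root ∧ ∀ a ∈ A \ {v}, a ∉ p := by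
    simpa [Dominates] using hA.2 v hv
  have honly : ∀ a ∈ A, a ∈ p → a = v := fun a ha hap ↦
    by_contra fun hav ↦ hpA a ⟨ha, hav⟩ hap
  have hvp : v ∈ p := by
    obtain ⟨a, ha, hap⟩ := hA.1 c hc p hp
    exact honly a ha hap ▸ hap
  obtain ⟨q, hqp, hq, hvq⟩ := hp.exists_suffix_notMem_tail hvp
  obtain ⟨b, hb, hbq⟩ := hBA v hv q hq
  obtain ⟨r, hrq, hr⟩ := hq.exists_suffix hbq
  obtain ⟨a, ha, har⟩ := hAB b hb r hr
  have hav : a = v := honly a ha ((hrq.trans hqp).subset har)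
  subst hav
  exact hq.eq_of_suffix_of_mem hvq hr hrq har ▸ hb

end

theorem dominator_antisymm_general {V : Type*} (E : V → V → Prop) (root : V)
    (u : V) (A B : Set V) (hAB : A ≠ B)
    (hA : IsDominator E root A {u}) (hB : IsDominator E root B {u})
    (hBA : Dominates E root B A) :
    ¬ Dominates E root A B := fun hABd ↦
  hAB (subset_antisymm (hA.subset_of_dominates hBA hABd) (hB.subset_of_dominates hABd hBA))

theorem dominator_antisymm {V : Type*} [Fintype V] (E : V → V → Prop) (root : V)
    (hacyc : Acyclic E) (u : V) (A B : Set V) (hAB : A ≠ B)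
    (hA : IsDominator E root A {u}) (hB : IsDominator E root B {u})
    (hBA : Dominates E root B A) :
    ¬ Dominates E root A B :=
  dominator_antisymm_general E root u A B hAB hA hB hBA
end

section
/- If {v1, v2} and {v2, v3} are both double-vertex dominators of a vertex u, then either {v1, v2} dominates v3, or {v2, v3} dominates v1. -/
/-!
Suppose neither domination holds, so there are paths `P` from `v₃` and `Q` from `v₁` to the
root, avoiding the two other vertices. A path `R` from `u` to the root avoiding `v₂` meets both
`v₁` and `v₃`. Following `R` up to the first of them it meets and continuing along `Q` (resp.
`P`) gives a path from `u` avoiding `{v₂, v₃}` (resp. `{v₁, v₂}`), which is impossible.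
-/

theorem List.exists_eq_append_cons_of_exists {α : Type*} {P : α → Prop} {l : List α}
    (h : ∃ x ∈ l, P x) : ∃ q m r, l = q ++ m :: r ∧ P m ∧ ∀ x ∈ q, ¬ P x := by
  classical
  obtain ⟨m, hm⟩ := Option.isSome_iff_exists.mp
    (List.find?_isSome (p := fun x => decide (P x)) |>.mpr (by simpa using h))
  obtain ⟨hPm, q, r, rfl, hq⟩ := List.find?_eq_some_iff_append.mp hm
  exact ⟨q, m, r, rfl, by simpa using hPm, by simpa using hq⟩

section

variable {V : Type*} {E : V → V → Prop} {root : V}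

theorem IsPath.append_of_prefix {q r Q : List V} {a b c m : V}
    (hR : IsPath E (q ++ m :: r) a b) (hQ : IsPath E Q m c) : IsPath E (q ++ Q) a c := by
  obtain ⟨-, hRh, -, hRc⟩ := hR
  obtain ⟨hQne, hQh, hQl, hQc⟩ := hQ
  have hQ_eq : [m] ++ Q.tail = Q := List.cons_head?_tail hQh
  refine ⟨by simp [hQne], ?_, by rwa [List.getLast?_append_of_ne_nil _ hQne], ?_⟩
  · rw [List.head?_append] at hRh ⊢
    rwa [hQh]
  · have hqm : List.IsChain E (q ++ [m]) := by
      rw [show q ++ m :: r = q ++ [m] ++ r by simp] at hRc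
      exact hRc.left_of_append
    rw [← hQ_eq, ← List.append_assoc]
    exact hqm.append_overlap (hQ_eq ▸ hQc) (List.cons_ne_nil _ _)

theorem not_dominates_singleton_iff {A : Set V} {b : V} :
    ¬ Dominates E root A {b} ↔ ∃ p, IsPath E p b root ∧ ∀ x ∈ p, x ∉ A := by
  simp only [Dominates, Set.mem_singleton_iff, forall_eq, not_forall, not_exists, exists_prop,
    not_and']

theorem not_dominates_of_reroute {A : Set V} {q r Q : List V} {a m : V}
    (hR : IsPath E (q ++ m :: r) a root) (hQ : IsPath E Q m root)
    (hqA : ∀ x ∈ q, x ∉ A) (hQA : ∀ x ∈ Q, x ∉ A) : ¬ Dominates E root A {a} :=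
  not_dominates_singleton_iff.mpr ⟨q ++ Q, hR.append_of_prefix hQ, by
    simpa only [List.mem_append, or_imp, forall_and] using ⟨hqA, hQA⟩⟩

end

theorem doubleDom_common_vertex_general {V : Type*} (E : V → V → Prop) (root : V)
    (u v₁ v₂ v₃ : V)
    (h12 : DoubleDom E root u v₁ v₂) (h23 : DoubleDom E root u v₂ v₃) :
    Dominates E root {v₁, v₂} {v₃} ∨ Dominates E root {v₂, v₃} {v₁} := by
  obtain ⟨-, hdom₁₂, -, hv₂_not_dom⟩ := h12
  obtain ⟨-, hdom₂₃, -, -⟩ := h23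
  by_contra! ⟨h3, h1⟩
  obtain ⟨P, hP, hPv⟩ := not_dominates_singleton_iff.mp h3
  obtain ⟨Q, hQ, hQv⟩ := not_dominates_singleton_iff.mp h1
  obtain ⟨R, hR, hRv₂⟩ := not_dominates_singleton_iff.mp hv₂_not_dom
  have hv₁R : v₁ ∈ R := by
    obtain ⟨a, ha, haR⟩ := hdom₁₂ u rfl R hR
    rcases ha with rfl | rfl
    exacts [haR, absurd rfl (hRv₂ a haR)]
  obtain ⟨q, m, r, rfl, hm, hq⟩ :=
    List.exists_eq_append_cons_of_exists (P := (· ∈ ({v₁, v₃} : Set V))) ⟨v₁, hv₁R, by simp⟩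
  have hqv₂ : ∀ x ∈ q, x ≠ v₂ := fun x hx => hRv₂ x (by simp [hx])
  rcases hm with rfl | rfl
  · exact not_dominates_of_reroute hR hQ
      (fun x hx hA => hA.elim (hqv₂ x hx) fun h => hq x hx (Or.inr h)) hQv hdom₂₃
  · exact not_dominates_of_reroute hR hP
      (fun x hx hA => hA.elim (fun h => hq x hx (Or.inl h)) (hqv₂ x hx)) hPv hdom₁₂

theorem doubleDom_common_vertex {V : Type*} [Fintype V] (E : V → V → Prop) (root : V)
    (hacyc : Acyclic E) (u v₁ v₂ v₃ : V)
    (h12 : DoubleDom E root u v₁ v₂) (h23 : DoubleDom E root u v₂ v₃) :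
    Dominates E root {v₁, v₂} {v₃} ∨ Dominates E root {v₂, v₃} {v₁} :=
  doubleDom_common_vertex_general E root u v₁ v₂ v₃ h12 h23
end

section
/- If {v1, v2} ∈ D_u and {v3, v4} ∈ D_u are double-vertex dominators of u such that {v3, v4} does not dominate v1 and {v1, v2} does not dominate v4, then {v3, v4} dominates v2 and {v1, v2} dominates v3. -/
/-!
Let `{a, b}` and `{c, d}` dominate `u`, with `{c}` alone not dominating `u`, and let `a` reach the
root avoiding `{c, d}` and `d` reach it avoiding `{a, b}`. If `b` also reached the root avoiding
`{c, d}`, follow a `c`-avoiding path from `u` up to the first of `a`, `b`, `d` it meets (it meets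
one since `{a, b}` dominates `u`). Continuing from there along the escape path of that vertex gives
a path from `u` to the root avoiding `{c, d}` or `{a, b}`, which is impossible.
-/

def ReachAvoiding {V : Type*} (E : V → V → Prop) (A : Set V) (x y : V) : Prop :=
  x ∉ A ∧ Relation.ReflTransGen (fun a b => E a b ∧ b ∉ A) x y

namespace ReachAvoiding

variable {V : Type*} {E : V → V → Prop} {A B C : Set V} {x y z : V}

lemma refl (hx : x ∉ A) : ReachAvoiding E A x x := ⟨hx, .refl⟩

lemma trans (hxy : ReachAvoiding E A x y) (hyz : ReachAvoiding E A y z) :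
    ReachAvoiding E A x z :=
  ⟨hxy.1, hxy.2.trans hyz.2⟩

lemma mono (hAB : A ⊆ B) (h : ReachAvoiding E B x y) : ReachAvoiding E A x y :=
  ⟨fun hx => h.1 (hAB hx),
    Relation.ReflTransGen.mono (fun _ _ hab => ⟨hab.1, fun hb => hab.2 (hAB hb)⟩) _ _ h.2⟩

/-- Cut a path avoiding `C` at its first vertex `z` in `B`. -/
lemma exists_first_mem (h : ReachAvoiding E C x y) (hB : ¬ ReachAvoiding E B x y) :
    ∃ z ∈ B, ReachAvoiding E ((C ∪ B) \ {z}) x z := by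
  obtain ⟨hxC, hxy⟩ := h
  induction hxy using Relation.ReflTransGen.head_induction_on with
  | refl => exact ⟨_, not_not.mp fun hyB => hB (refl hyB), refl fun hy => hy.2 rfl⟩
  | @head x w hxw hwy ih =>
    by_cases hxB : x ∈ B
    · exact ⟨x, hxB, refl fun hx => hx.2 rfl⟩
    have hxCB : x ∉ C ∪ B := fun hx => hx.elim hxC hxB
    obtain ⟨z, hzB, hwz⟩ := ih (fun hw => hB ⟨hxB, .head ⟨hxw.1, hw.1⟩ hw.2⟩) hxw.2
    exact ⟨z, hzB, ⟨fun hx => hxCB hx.1, .head ⟨hxw.1, hwz.1⟩ hwz.2⟩⟩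

end ReachAvoiding

lemma reachAvoiding_iff_exists_isPath {V : Type*} {E : V → V → Prop} {A : Set V} {x y : V} :
    ReachAvoiding E A x y ↔ ∃ p, IsPath E p x y ∧ ∀ z ∈ p, z ∉ A := by
  constructor
  · rintro ⟨hx, hxy⟩
    obtain ⟨l, hchain, hlast⟩ := List.exists_isChain_cons_of_relationReflTransGen hxy
    refine ⟨x :: l, ⟨List.cons_ne_nil _ _, rfl, ?_, hchain.imp fun _ _ h => h.1⟩, ?_⟩
    · rw [List.getLast?_eq_some_getLast (List.cons_ne_nil _ _), hlast]
    · exact hchain.induction (· ∉ A) _ (fun _ _ h _ => h.2) fun _ => hx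
  · rintro ⟨p, ⟨hne, hhead, hlast, hchain⟩, hp⟩
    obtain ⟨l, rfl⟩ : ∃ l, p = x :: l := by
      cases p with
      | nil => exact absurd rfl hne
      | cons a l => exact ⟨l, by simpa using hhead⟩
    refine ⟨hp x List.mem_cons_self, List.relationReflTransGen_of_exists_isChain_cons l ?_ ?_⟩
    · exact hchain.imp_of_mem_imp fun _ b _ hb hab => ⟨hab, hp b hb⟩
    · simpa [List.getLast?_eq_some_getLast (List.cons_ne_nil _ _)] using hlast

lemma dominates_singleton_iff_not_reachAvoiding {V : Type*} {E : V → V → Prop} {root : V}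
    {A : Set V} {x : V} :
    Dominates E root A {x} ↔ ¬ ReachAvoiding E A x root := by
  rw [reachAvoiding_iff_exists_isPath]
  simp only [Dominates, Set.mem_singleton_iff, forall_eq, not_exists, not_and, not_forall,
    not_not]
  grind

lemma dominates_of_crossing {V : Type*} {E : V → V → Prop} {root u a b c d : V}
    (hab : Dominates E root {a, b} {u}) (hcd : Dominates E root {c, d} {u})
    (hc : ¬ Dominates E root {c} {u}) (ha : ¬ Dominates E root {c, d} {a})
    (hd : ¬ Dominates E root {a, b} {d}) : Dominates E root {c, d} {b} := by
  simp only [dominates_singleton_iff_not_reachAvoiding, not_not] at *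
  intro hb
  have habd : ¬ ReachAvoiding E {a, b, d} u root :=
    fun h => hab (h.mono (by simp [Set.insert_subset_iff]))
  obtain ⟨x, hx, hux⟩ := hc.exists_first_mem habd
  have hreach {T : Set V} (hT : T ⊆ {c} ∪ {a, b, d}) (hxT : x ∉ T) : ReachAvoiding E T u x :=
    hux.mono (Set.subset_sdiff_singleton hT hxT)
  simp only [Set.mem_insert_iff, Set.mem_singleton_iff] at hx
  rcases hx with rfl | rfl | rfl
  · exact hcd ((hreach (by simp [Set.insert_subset_iff]) ha.1).trans ha)
  · exact hcd ((hreach (by simp [Set.insert_subset_iff]) hb.1).trans hb)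
  · exact hab ((hreach (by simp [Set.insert_subset_iff]) hd.1).trans hd)

theorem doubleDom_cross_dominates_general {V : Type*} (E : V → V → Prop) (root : V)
    (u v₁ v₂ v₃ v₄ : V)
    (h12 : DoubleDom E root u v₁ v₂) (h34 : DoubleDom E root u v₃ v₄)
    (h1 : ¬ Dominates E root {v₃, v₄} {v₁})
    (h4 : ¬ Dominates E root {v₁, v₂} {v₄}) :
    Dominates E root {v₃, v₄} {v₂} ∧ Dominates E root {v₁, v₂} {v₃} := by
  obtain ⟨-, h12u, -, h2⟩ := h12
  obtain ⟨-, h34u, h3, -⟩ := h34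
  refine ⟨dominates_of_crossing h12u h34u h3 h1 h4, ?_⟩
  rw [Set.pair_comm] at h12u h34u h1 h4 ⊢
  exact dominates_of_crossing h34u h12u h2 h4 h1

theorem doubleDom_cross_dominates {V : Type*} [Fintype V] (E : V → V → Prop) (root : V)
    (hacyc : Acyclic E) (u v₁ v₂ v₃ v₄ : V)
    (h12 : DoubleDom E root u v₁ v₂) (h34 : DoubleDom E root u v₃ v₄)
    (h1 : ¬ Dominates E root {v₃, v₄} {v₁})
    (h4 : ¬ Dominates E root {v₁, v₂} {v₄}) :
    Dominates E root {v₃, v₄} {v₂} ∧ Dominates E root {v₁, v₂} {v₃} :=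
  doubleDom_cross_dominates_general E root u v₁ v₂ v₃ v₄ h12 h34 h1 h4
end

section
/- If {v1, v2}, {v2, v3}, and {v1, v4} are all double-vertex dominators of u, and {v1, v2} dominates v3, then {v1, v4} dominates v3. -/
/-! Suppose a path `q` from `v₃` to `root` misses `v₁` and `v₄`. As `{v₁, v₂}` dominates `v₃`,
`q` passes through `v₂`, so `v₂` reaches `root` avoiding `{v₁, v₄}`. A path from `u` to `root`
avoiding `v₂` exists and meets `{v₁, v₃}`; its suffix from the last such vertex cannot start at
`v₃` (again because `{v₁, v₂}` dominates `v₃`), so `v₁` reaches `root` avoiding `{v₂, v₃}`.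
Finally, a path from `u` to `root` avoiding `v₄` meets `{v₁, v₂, v₃}`; cut it at the first such
vertex and continue along the matching path above. This gives a path from `u` to `root` avoiding
`{v₁, v₄}` or `{v₂, v₃}`, contradicting that both pairs dominate `u`. -/

section

variable {V : Type*}

def ReachesAvoiding (E : V → V → Prop) (S : Set V) (a b : V) : Prop :=
  a ∉ S ∧ b ∉ S ∧ Relation.ReflTransGen (fun x y => x ∉ S ∧ E x y ∧ y ∉ S) a b

variable {E : V → V → Prop}

namespace ReachesAvoiding

variable {S S' T : Set V} {a b c : V}

theorem refl (ha : a ∉ S) : ReachesAvoiding E S a a := ⟨ha, ha, .refl⟩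

theorem head (ha : a ∉ S) (hab : E a b) (hbc : ReachesAvoiding E S b c) :
    ReachesAvoiding E S a c :=
  ⟨ha, hbc.2.1, .head ⟨ha, hab, hbc.1⟩ hbc.2.2⟩

theorem trans (hab : ReachesAvoiding E S a b) (hbc : ReachesAvoiding E S b c) :
    ReachesAvoiding E S a c :=
  ⟨hab.1, hbc.2.1, hab.2.2.trans hbc.2.2⟩

theorem anti (h : ReachesAvoiding E S' a b) (hS : S ⊆ S') : ReachesAvoiding E S a b :=
  ⟨fun ha => h.1 (hS ha), fun hb => h.2.1 (hS hb),
    Relation.ReflTransGen.mono (fun _ _ (hxy : _ ∧ _ ∧ _) =>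
      ⟨fun h' => hxy.1 (hS h'), hxy.2.1, fun h' => hxy.2.2 (hS h')⟩) _ _ h.2.2⟩

theorem flip_iff : ReachesAvoiding (flip E) S a b ↔ ReachesAvoiding E S b a := by
  have hrel : Function.swap (fun x y => x ∉ S ∧ E x y ∧ y ∉ S) =
      fun x y => x ∉ S ∧ flip E x y ∧ y ∉ S := by
    funext x y; simp only [Function.swap, flip, eq_iff_iff]; tauto
  rw [ReachesAvoiding, ReachesAvoiding, ← hrel, Relation.reflTransGen_swap, and_left_comm]

theorem exists_first_mem (h : ReachesAvoiding E S a b) (hT : ¬ ReachesAvoiding E (S ∪ T) a b) :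
    ∃ w ∈ T, ReachesAvoiding E (S ∪ (T \ {w})) a w ∧ ReachesAvoiding E S w b := by
  obtain ⟨ha, hb, hab⟩ := h
  induction hab using Relation.ReflTransGen.head_induction_on with
  | refl =>
    have hbT : b ∈ T := by
      by_contra hbT
      exact hT (.refl (by simp [hb, hbT]))
    exact ⟨b, hbT, .refl (by simp [hb]), .refl hb⟩
  | @head a c hac hcb ih =>
    by_cases haT : a ∈ T
    · exact ⟨a, haT, .refl (by simp [ha]), ⟨ha, hb, .head hac hcb⟩⟩
    · have hcT : ¬ ReachesAvoiding E (S ∪ T) c b :=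
        fun hcb' => hT (hcb'.head (by simp [ha, haT]) hac.2.1)
      obtain ⟨w, hwT, hcw, hwb⟩ := ih hcT hac.2.2
      exact ⟨w, hwT, hcw.head (by simp [ha, haT]) hac.2.1, hwb⟩

theorem exists_last_mem (h : ReachesAvoiding E S a b) (hT : ¬ ReachesAvoiding E (S ∪ T) a b) :
    ∃ w ∈ T, ReachesAvoiding E S a w ∧ ReachesAvoiding E (S ∪ (T \ {w})) w b := by
  rw [← flip_iff] at h hT
  obtain ⟨w, hwT, hbw, hwa⟩ := h.exists_first_mem hT
  exact ⟨w, hwT, flip_iff.1 hwa, flip_iff.1 hbw⟩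

end ReachesAvoiding

theorem reachesAvoiding_iff_exists_isPath {S : Set V} {a b : V} :
    ReachesAvoiding E S a b ↔ ∃ p, IsPath E p a b ∧ ∀ x ∈ p, x ∉ S := by
  constructor
  · rintro ⟨ha, -, hab⟩
    obtain ⟨l, hc, hl⟩ := List.exists_isChain_cons_of_relationReflTransGen hab
    refine ⟨a :: l, ⟨List.cons_ne_nil _ _, rfl, ?_, ?_⟩, ?_⟩
    · rwa [← List.getLast_eq_iff_getLast?_eq_some]
    · exact hc.imp fun _ _ h => h.2.1
    · exact hc.induction (· ∉ S) _ (fun _ _ h _ => h.2.2) fun _ => ha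
  · rintro ⟨p, ⟨hne, hh, hl, hc⟩, hS⟩
    have hc' := List.relationReflTransGen_of_exists_isChain p
      (hc.imp_of_mem_imp (S := fun x y => x ∉ S ∧ E x y ∧ y ∉ S)
        fun x y hx hy hxy => ⟨hS x hx, hxy, hS y hy⟩) hne
    rw [List.head_eq_iff_head?_eq_some _ |>.2 hh, List.getLast_eq_iff_getLast?_eq_some _ |>.2 hl]
      at hc'
    exact ⟨hS a (List.mem_of_mem_head? hh), hS b (List.mem_of_getLast? hl), hc'⟩

theorem dominates_singleton_iff {root b : V} {A : Set V} :
    Dominates E root A {b} ↔ ¬ ReachesAvoiding E A b root := by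
  simp only [Dominates, Set.mem_singleton_iff, forall_eq, reachesAvoiding_iff_exists_isPath]
  push Not
  exact forall_congr' fun _ => imp_congr_right fun _ =>
    ⟨fun ⟨x, hxA, hx⟩ => ⟨x, hx, hxA⟩, fun ⟨x, hx, hxA⟩ => ⟨x, hxA, hx⟩⟩

end

theorem doubleDom_transfer_general {V : Type*} (E : V → V → Prop) (root : V)
    (u v₁ v₂ v₃ v₄ : V)
    (h12 : DoubleDom E root u v₁ v₂) (h23 : DoubleDom E root u v₂ v₃)
    (h14 : DoubleDom E root u v₁ v₄)
    (hdom : Dominates E root {v₁, v₂} {v₃}) :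
    Dominates E root {v₁, v₄} {v₃} := by
  obtain ⟨h12ne, h12d, -, h12n2⟩ := h12
  obtain ⟨-, h23d, -, -⟩ := h23
  obtain ⟨-, h14d, -, h14n4⟩ := h14
  simp only [dominates_singleton_iff, not_not] at h12d h12n2 h23d h14d h14n4 hdom ⊢
  intro hq
  have h13 : v₁ ≠ v₃ := fun h => hq.1 (by simp [h])
  have hP : ReachesAvoiding E {v₁, v₄} v₂ root := by
    obtain ⟨_, rfl, -, hwr⟩ := hq.exists_first_mem (T := {v₂}) fun h => hdom (h.anti (by grind))
    exact hwr
  have hR : ReachesAvoiding E {v₂, v₃} v₁ root := by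
    obtain ⟨w, hw, -, hwr⟩ :=
      h12n2.exists_last_mem (T := {v₁, v₃}) fun h => h12d (h.anti (by grind))
    rcases hw with rfl | rfl
    · exact hwr.anti (by grind)
    · exact absurd (hwr.anti (by grind)) hdom
  obtain ⟨w, hw, huw, -⟩ :=
    h14n4.exists_first_mem (T := {v₁, v₂, v₃}) fun h => h14d (h.anti (by grind))
  rcases hw with rfl | rfl | rfl
  · exact h23d ((huw.anti (by grind)).trans hR)
  · exact h14d ((huw.anti (by grind)).trans hP)
  · exact h14d ((huw.anti (by grind)).trans hq)

theorem doubleDom_transfer {V : Type*} [Fintype V] (E : V → V → Prop) (root : V)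
    (hacyc : Acyclic E) (u v₁ v₂ v₃ v₄ : V)
    (h12 : DoubleDom E root u v₁ v₂) (h23 : DoubleDom E root u v₂ v₃)
    (h14 : DoubleDom E root u v₁ v₄)
    (hdom : Dominates E root {v₁, v₂} {v₃}) :
    Dominates E root {v₁, v₄} {v₃} :=
  doubleDom_transfer_general E root u v₁ v₂ v₃ v₄ h12 h23 h14 hdom
end

section
/- For any non-empty finite subset 𝔸 of the set D_u of double-vertex dominators of u, there exists a double-vertex dominator {v1, v2} ∈ D_u that is dominated by every dominator in 𝔸. -/
/-!
Given two double-vertex dominators `{v, w}` and `{c, d}` of `u`, either one dominates the other,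
or consider the vertices of `{v, w, c, d}` that both pairs dominate. Along any path from `u` to
the root, domination by both pairs persists until the path meets one of the four vertices, so
these vertices dominate `u`. If neither pair dominates the other, each pair contributes at most
one of them, and since no single vertex dominates `u` they form a double-vertex dominator, which
both pairs dominate. Domination is transitive, so induction over the finite set gives the theorem.
-/

section

variable {V : Type*} {E : V → V → Prop} {root : V}

section Paths

variable {p : List V} {a b c r : V}

theorem isPath_singleton_iff : IsPath E [a] b r ↔ a = b ∧ a = r :=
  ⟨fun ⟨_, hhead, hlast, _⟩ => ⟨by simpa using hhead, by simpa using hlast⟩,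
    fun ⟨hb, hr⟩ => ⟨by simp, by simp [hb], by simp [hr], List.isChain_singleton a⟩⟩

theorem isPath_cons_cons_iff {l : List V} :
    IsPath E (a :: b :: l) c r ↔ a = c ∧ E a b ∧ IsPath E (b :: l) b r :=
  ⟨fun ⟨_, hhead, hlast, hchain⟩ =>
      ⟨by simpa using hhead, (List.isChain_cons_cons.1 hchain).1, by simp, rfl,
        by rwa [List.getLast?_cons_cons] at hlast, (List.isChain_cons_cons.1 hchain).2⟩,
    fun ⟨hc, hab, _, _, hlast, hchain⟩ =>
      ⟨by simp, by simp [hc], by rwa [List.getLast?_cons_cons],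
        List.isChain_cons_cons.2 ⟨hab, hchain⟩⟩⟩

theorem IsPath.head_mem (hp : IsPath E p a b) : a ∈ p := by
  obtain ⟨-, hhead, -, -⟩ := hp
  exact List.mem_of_mem_head? hhead

theorem IsPath.cons (hab : E a b) (hp : IsPath E p b r) : IsPath E (a :: p) a r := by
  obtain ⟨hne, hhead, hlast, hchain⟩ := hp
  obtain ⟨b', l, rfl⟩ := List.exists_cons_of_ne_nil hne
  obtain rfl : b' = b := by simpa using hhead
  exact isPath_cons_cons_iff.2 ⟨rfl, hab, hne, hhead, hlast, hchain⟩

theorem IsPath.exists_suffix_s8 (hp : IsPath E p a r) (hc : c ∈ p) :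
    ∃ q, IsPath E q c r ∧ q ⊆ p := by
  induction p generalizing a with
  | nil => simp at hc
  | cons x l ih =>
    rcases List.mem_cons.1 hc with rfl | hc
    · obtain ⟨hne, hhead, hlast, hchain⟩ := hp
      exact ⟨c :: l, ⟨hne, rfl, hlast, hchain⟩, List.Subset.refl _⟩
    · obtain ⟨y, l', rfl⟩ := List.exists_cons_of_ne_nil (List.ne_nil_of_mem hc)
      obtain ⟨q, hq, hsub⟩ := ih (isPath_cons_cons_iff.1 hp).2.2 hc
      exact ⟨q, hq, List.Subset.trans hsub (List.subset_cons_self _ _)⟩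

end Paths

section Dominates

variable {X X' Y B B' : Set V} {a b : V}

theorem dominates_refl (X : Set V) : Dominates E root X X :=
  fun _ hb _ hp => ⟨_, hb, hp.head_mem⟩

theorem Dominates.mono_left (hXX' : X ⊆ X') (h : Dominates E root X B) :
    Dominates E root X' B := fun b hb p hp =>
  let ⟨x, hx, hxp⟩ := h b hb p hp
  ⟨x, hXX' hx, hxp⟩

theorem Dominates.mono_right (hBB' : B' ⊆ B) (h : Dominates E root X B) :
    Dominates E root X B' := fun b hb => h b (hBB' hb)

theorem dominates_iff_forall_singleton :
    Dominates E root X B ↔ ∀ b ∈ B, Dominates E root X {b} :=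
  ⟨fun h _ hb => h.mono_right (Set.singleton_subset_iff.2 hb),
    fun h b hb => h b hb b rfl⟩

theorem dominates_pair_iff :
    Dominates E root X {a, b} ↔ Dominates E root X {a} ∧ Dominates E root X {b} := by
  simp [dominates_iff_forall_singleton (B := {a, b})]

theorem Dominates.trans (hXY : Dominates E root X Y) (hYB : Dominates E root Y B) :
    Dominates E root X B := by
  intro b hb p hp
  obtain ⟨y, hy, hyp⟩ := hYB b hb p hp
  obtain ⟨q, hq, hqp⟩ := hp.exists_suffix_s8 hyp
  obtain ⟨x, hx, hxq⟩ := hXY y hy q hq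
  exact ⟨x, hx, hqp hxq⟩

theorem mem_of_dominates_root (h : Dominates E root X {root}) : root ∈ X := by
  obtain ⟨x, hx, hxp⟩ := h root rfl [root] (isPath_singleton_iff.2 ⟨rfl, rfl⟩)
  rwa [List.mem_singleton.1 hxp] at hx

theorem Dominates.of_edge (h : Dominates E root X {a}) (ha : a ∉ X) (hab : E a b) :
    Dominates E root X {b} := by
  rintro _ rfl p hp
  obtain ⟨x, hx, hxp⟩ := h a rfl (a :: p) (hp.cons hab)
  rcases List.mem_cons.1 hxp with rfl | hxp
  · exact absurd hx ha
  · exact ⟨x, hx, hxp⟩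

end Dominates

section Meet

variable {X Y B : Set V}

def jointlyDominated (E : V → V → Prop) (root : V) (X Y : Set V) : Set V :=
  {z | z ∈ X ∪ Y ∧ Dominates E root X {z} ∧ Dominates E root Y {z}}

theorem dominates_jointlyDominated_left :
    Dominates E root X (jointlyDominated E root X Y) :=
  dominates_iff_forall_singleton.2 fun _ hz => hz.2.1

theorem dominates_jointlyDominated_right :
    Dominates E root Y (jointlyDominated E root X Y) :=
  dominates_iff_forall_singleton.2 fun _ hz => hz.2.2

/-- Domination by `X` and `Y` propagates along the path until it meets `X ∪ Y`, which it must do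
since `X` dominates `root` only if `root ∈ X`. -/
theorem exists_mem_jointlyDominated_of_isPath {p : List V} {b : V} (hp : IsPath E p b root)
    (hX : Dominates E root X {b}) (hY : Dominates E root Y {b}) :
    ∃ z ∈ p, z ∈ jointlyDominated E root X Y := by
  induction p generalizing b with
  | nil => exact absurd rfl hp.1
  | cons a l ih =>
    obtain rfl : a = b := by simpa using hp.2.1
    by_cases ha : a ∈ X ∪ Y
    · exact ⟨a, List.mem_cons_self, ha, hX, hY⟩
    obtain ⟨haX, haY⟩ := not_or.1 ha
    cases l with
    | nil =>
      obtain rfl := (isPath_singleton_iff.1 hp).2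
      exact absurd (mem_of_dominates_root hX) haX
    | cons b l =>
      obtain ⟨-, hab, hp'⟩ := isPath_cons_cons_iff.1 hp
      obtain ⟨z, hz, hzXY⟩ := ih hp' (hX.of_edge haX hab) (hY.of_edge haY hab)
      exact ⟨z, List.mem_cons_of_mem _ hz, hzXY⟩

theorem Dominates.jointlyDominated (hX : Dominates E root X B) (hY : Dominates E root Y B) :
    Dominates E root (jointlyDominated E root X Y) B := fun b hb _ hp =>
  let ⟨z, hzp, hz⟩ := exists_mem_jointlyDominated_of_isPath hp
    (dominates_iff_forall_singleton.1 hX b hb) (dominates_iff_forall_singleton.1 hY b hb)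
  ⟨z, hz, hzp⟩

end Meet

section DoubleDom

variable {u v w c d : V}

theorem DoubleDom.symm (h : DoubleDom E root u v w) : DoubleDom E root u w v :=
  ⟨h.1.symm, Set.pair_comm v w ▸ h.2.1, h.2.2.2, h.2.2.1⟩

theorem DoubleDom.exists_eq_pair_of_not_dominates {X : Set V} (h : DoubleDom E root u v w)
    (hX : ¬Dominates E root X {v, w}) :
    ∃ x x', DoubleDom E root u x x' ∧ ({x, x'} : Set V) = {v, w} ∧
      ¬Dominates E root X {x} := by
  rw [dominates_pair_iff, not_and_or] at hX
  rcases hX with hv | hw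
  · exact ⟨v, w, h, rfl, hv⟩
  · exact ⟨w, v, h.symm, Set.pair_comm w v, hw⟩

theorem doubleDom_of_dominates_subset_pair {S : Set V} (hS : Dominates E root S {u})
    (hSvw : S ⊆ {v, w}) (hv : ¬Dominates E root {v} {u}) (hw : ¬Dominates E root {w} {u}) :
    DoubleDom E root u v w ∧ v ∈ S ∧ w ∈ S := by
  have hvS : v ∈ S := by
    by_contra hvS
    exact hw (hS.mono_left fun z hz => (hSvw hz).resolve_left fun hzv => hvS (hzv ▸ hz))
  have hwS : w ∈ S := by
    by_contra hwS
    exact hv (hS.mono_left fun z hz => (hSvw hz).resolve_right fun hzw => hwS (hzw ▸ hz))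
  have hvw : v ≠ w := by
    rintro rfl
    exact hv (hS.mono_left (by simpa using hSvw))
  exact ⟨⟨hvw, hS.mono_left hSvw, hv, hw⟩, hvS, hwS⟩

/-- If `{y, y'}` does not dominate `x` and `{x, x'}` does not dominate `y`, the vertices of
`{x, x', y, y'}` dominated by both pairs are exactly `x'` and `y'`. -/
theorem doubleDom_of_not_dominates {x x' y y' : V} (hX : DoubleDom E root u x x')
    (hY : DoubleDom E root u y y') (hx : ¬Dominates E root {y, y'} {x})
    (hy : ¬Dominates E root {x, x'} {y}) :
    DoubleDom E root u x' y' ∧ Dominates E root {x, x'} {x', y'} ∧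
      Dominates E root {y, y'} {x', y'} := by
  set S := jointlyDominated E root {x, x'} {y, y'}
  have hS : Dominates E root S {u} := hX.2.1.jointlyDominated hY.2.1
  have hSsub : S ⊆ {x', y'} := by
    rintro z ⟨(rfl | rfl) | (rfl | rfl), hzX, hzY⟩
    · exact absurd hzY hx
    · exact Or.inl rfl
    · exact absurd hzX hy
    · exact Or.inr rfl
  obtain ⟨hdd, hx'S, hy'S⟩ :=
    doubleDom_of_dominates_subset_pair hS hSsub hX.2.2.2 hY.2.2.2
  have hpair : {x', y'} ⊆ S :=
    Set.insert_subset_iff.2 ⟨hx'S, Set.singleton_subset_iff.2 hy'S⟩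
  exact ⟨hdd, dominates_jointlyDominated_left.mono_right hpair,
    dominates_jointlyDominated_right.mono_right hpair⟩

theorem DoubleDom.exists_common_lower_bound (hP : DoubleDom E root u v w)
    (hQ : DoubleDom E root u c d) :
    ∃ a b, DoubleDom E root u a b ∧ Dominates E root {v, w} {a, b} ∧
      Dominates E root {c, d} {a, b} := by
  by_cases hQP : Dominates E root {c, d} {v, w}
  · exact ⟨v, w, hP, dominates_refl _, hQP⟩
  by_cases hPQ : Dominates E root {v, w} {c, d}
  · exact ⟨c, d, hQ, hPQ, dominates_refl _⟩
  obtain ⟨x, x', hX, hXP, hx⟩ := hP.exists_eq_pair_of_not_dominates hQP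
  obtain ⟨y, y', hY, hYQ, hy⟩ := hQ.exists_eq_pair_of_not_dominates hPQ
  rw [← hYQ] at hx
  rw [← hXP] at hy
  rw [← hXP, ← hYQ]
  exact ⟨x', y', doubleDom_of_not_dominates hX hY hx hy⟩

end DoubleDom

end

theorem doubleDom_common_lower_bound_general {V : Type*}
    (E : V → V → Prop) (root : V) (u : V)
    (A : Finset (V × V)) (hne : A.Nonempty)
    (hA : ∀ p ∈ A, DoubleDom E root u p.1 p.2) :
    ∃ v₁ v₂, DoubleDom E root u v₁ v₂ ∧
      ∀ p ∈ A, Dominates E root {p.1, p.2} {v₁, v₂} := by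
  induction hne using Finset.Nonempty.cons_induction with
  | singleton q =>
    refine ⟨q.1, q.2, hA q (Finset.mem_singleton_self q), fun p hp => ?_⟩
    rw [Finset.mem_singleton.1 hp]
    exact dominates_refl _
  | cons q B _ _ ih =>
    obtain ⟨v₁, v₂, hdd, hdom⟩ := ih fun p hp => hA p (Finset.mem_cons_of_mem hp)
    obtain ⟨a, b, hab, hv, hq⟩ :=
      hdd.exists_common_lower_bound (hA q (Finset.mem_cons_self q B))
    refine ⟨a, b, hab, fun p hp => ?_⟩
    rcases Finset.mem_cons.1 hp with rfl | hp
    · exact hq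
    · exact (hdom p hp).trans hv

theorem doubleDom_common_lower_bound {V : Type*} [Fintype V] [DecidableEq V]
    (E : V → V → Prop) (root : V) (hacyc : Acyclic E) (u : V)
    (A : Finset (V × V)) (hne : A.Nonempty)
    (hA : ∀ p ∈ A, DoubleDom E root u p.1 p.2) :
    ∃ v₁ v₂, DoubleDom E root u v₁ v₂ ∧
      ∀ p ∈ A, Dominates E root {p.1, p.2} {v₁, v₂} :=
  doubleDom_common_lower_bound_general E root u A hne hA
end

section
/- Overlap structure of matching sets: Let M_u(v) = { w : {v,w} ∈ D_u } be the matching set of v, linearly ordered so that w' precedes w whenever {v,w} dominates {v,w'}. For any two vertices v, v' appearing in double-vertex dominators of u, the intersection M_u(v) ∩ M_u(v') is either a suffix of the ordered vector M_u(v) and simultaneously a prefix of the ordered vector M_u(v'), or a suffix of M_u(v') and simultaneously a prefix of M_u(v). -/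
open Relation

namespace List

variable {α : Type*} {P : α → Bool} {l : List α}

lemma filter_isSuffix_of_pairwise (h : l.Pairwise fun a b => P a → P b) : l.filter P <:+ l := by
  induction l with
  | nil => simp
  | cons a t ih =>
    rw [pairwise_cons] at h
    by_cases ha : P a
    · rw [filter_cons_of_pos ha, filter_eq_self.mpr fun b hb => h.1 b hb ha]
    · rw [filter_cons_of_neg ha]
      exact (ih h.2).trans (suffix_cons a t)

lemma filter_isPrefix_of_pairwise (h : l.Pairwise fun a b => P b → P a) : l.filter P <+: l := by
  rw [← reverse_suffix, ← filter_reverse]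
  exact filter_isSuffix_of_pairwise (pairwise_reverse.mpr h)

end List

section

variable {V : Type*} {E : V → V → Prop}

namespace IsPath

variable {p q r : List V} {a b c d : V}

lemma start_mem (hp : IsPath E p a b) : a ∈ p := List.mem_of_mem_head? hp.2.1

lemma end_mem (hp : IsPath E p a b) : b ∈ p := List.mem_of_mem_getLast? hp.2.2.1

lemma reflTransGen (hp : IsPath E p a b) : ReflTransGen E a b := by
  obtain ⟨hne, hh, hl, hch⟩ := hp
  rw [List.head?_eq_some_head hne, Option.some_inj] at hh
  rw [List.getLast?_eq_some_getLast hne, Option.some_inj] at hl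
  exact hh ▸ hl ▸ List.relationReflTransGen_of_exists_isChain p hch hne

lemma exists_split (hp : IsPath E p a b) (hc : c ∈ p) :
    ∃ q r, p = q ++ c :: r ∧ IsPath E (q ++ [c]) a c ∧ IsPath E (c :: r) c b := by
  obtain ⟨-, hh, hl, hch⟩ := hp
  obtain ⟨q, r, rfl⟩ := List.append_of_mem hc
  refine ⟨q, r, rfl, ⟨by simp, ?_, by simp, hch.prefix ⟨r, by simp⟩⟩,
    ⟨by simp, rfl, by simpa [List.getLast?_append] using hl, hch.suffix ⟨q, rfl⟩⟩⟩
  cases q with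
  | nil => simpa using hh
  | cons x t => simpa using hh

lemma exists_prefix (hp : IsPath E p a b) (hc : c ∈ p) : ∃ q, IsPath E q a c ∧ q ⊆ p := by
  obtain ⟨q, r, rfl, hq, -⟩ := hp.exists_split hc
  exact ⟨q ++ [c], hq, (List.prefix_append_right_inj q |>.mpr (by simp)).subset⟩

lemma exists_suffix_s11 (hp : IsPath E p a b) (hc : c ∈ p) : ∃ r, IsPath E r c b ∧ r ⊆ p := by
  obtain ⟨q, r, rfl, -, hr⟩ := hp.exists_split hc
  exact ⟨c :: r, hr, (List.suffix_append q (c :: r)).subset⟩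

lemma reflTransGen_of_mem (hp : IsPath E p a b) (hc : c ∈ p) :
    ReflTransGen E a c ∧ ReflTransGen E c b := by
  obtain ⟨q, hq, -⟩ := hp.exists_prefix hc
  obtain ⟨r, hr, -⟩ := hp.exists_suffix_s11 hc
  exact ⟨hq.reflTransGen, hr.reflTransGen⟩

lemma reflTransGen_or_reflTransGen (hp : IsPath E p a b) (hc : c ∈ p) (hd : d ∈ p) :
    ReflTransGen E c d ∨ ReflTransGen E d c := by
  obtain ⟨q, r, rfl, hq, hr⟩ := hp.exists_split hc
  rcases List.mem_append.mp hd with hd | hd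
  · exact Or.inr (hq.reflTransGen_of_mem (List.mem_append_left _ hd)).2
  · exact Or.inl (hr.reflTransGen_of_mem hd).1

lemma append_tail (hq : IsPath E q a c) (hr : IsPath E r c b) : IsPath E (q ++ r.tail) a b := by
  obtain ⟨hne, hh, hl, hch⟩ := hq
  obtain ⟨-, hh', hl', hch'⟩ := hr
  obtain ⟨t, rfl⟩ : ∃ t, r = c :: t := by
    cases r with
    | nil => simp at hh'
    | cons x t => exact ⟨t, by simpa using hh'⟩
  refine ⟨by simp [hne], ?_, ?_, hch.append (List.isChain_cons.mp hch').2 ?_⟩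
  · cases q with
    | nil => simp at hne
    | cons x s => simpa using hh
  · cases t with
    | nil => simpa [hl] using hl'
    | cons y s => simpa [List.getLast?_append] using hl'
  · intro x hx y hy
    rw [hl, Option.mem_some_iff] at hx
    exact hx ▸ (List.isChain_cons.mp hch').1 y hy

end IsPath

lemma Acyclic.eq_of_reflTransGen (h : Acyclic E) {a b : V} (hab : ReflTransGen E a b)
    (hba : ReflTransGen E b a) : a = b := by
  rcases hab.cases_tail with rfl | ⟨c, hac, hcb⟩
  · rfl
  · exact absurd (hba.trans hac) (h c b hcb)

namespace Dominates

variable {root u x y z c d : V} {A Z : Set V} {p q r : List V}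

lemma mem_or_mem (h : Dominates E root {c, d} Z) (hz : z ∈ Z) (hp : IsPath E p z root) :
    c ∈ p ∨ d ∈ p := by
  obtain ⟨a, ha, hap⟩ := h z hz p hp
  rcases ha with rfl | rfl
  · exact Or.inl hap
  · exact Or.inr hap

lemma source_of_avoiding_path (h : Dominates E root A {u}) (hq : IsPath E q u c)
    (hA : ∀ a ∈ A, a ∉ q) : Dominates E root A {c} := by
  rintro _ rfl r hr
  obtain ⟨a, ha, hm⟩ := h u rfl _ (hq.append_tail hr)
  rcases List.mem_append.mp hm with hm | hm
  · exact absurd hm (hA a ha)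
  · exact ⟨a, ha, List.mem_of_mem_tail hm⟩

lemma root_of_avoiding_path (h : Dominates E root A {u}) (hr : IsPath E r c root)
    (hA : ∀ a ∈ A, a ∉ r) : Dominates E c A {u} := by
  intro b hb q hq
  obtain ⟨a, ha, hm⟩ := h b hb _ (hq.append_tail hr)
  rcases List.mem_append.mp hm with hm | hm
  · exact ⟨a, ha, hm⟩
  · exact absurd (List.mem_of_mem_tail hm) (hA a ha)

lemma reflTransGen_of_not_mem (h : Dominates E root {c, d} Z) (hz : z ∈ Z)
    (hp : IsPath E p x root) (hzp : z ∈ p) (hc : c ∉ p) : ReflTransGen E z d := by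
  obtain ⟨r, hr, hrp⟩ := hp.exists_suffix_s11 hzp
  exact (hr.reflTransGen_of_mem ((h.mem_or_mem hz hr).resolve_left fun hcr => hc (hrp hcr))).1

lemma reflTransGen_root_of_not_mem (h : Dominates E y {c, d} {u}) (hp : IsPath E p u x)
    (hyp : y ∈ p) (hc : c ∉ p) : ReflTransGen E d y := by
  obtain ⟨q, hq, hqp⟩ := hp.exists_prefix hyp
  exact (hq.reflTransGen_of_mem ((h.mem_or_mem rfl hq).resolve_left fun hcq => hc (hqp hcq))).2

end Dominates

lemma exists_isPath_not_mem_of_not_dominates {root u z : V}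
    (h : ¬ Dominates E root {z} {u}) : ∃ p, IsPath E p u root ∧ z ∉ p := by
  simpa [Dominates] using h

section MatchingSets

variable {root u v v' w x a b : V}

lemma DoubleDom.of_dominates (h : Dominates E root {v, w} {u}) (hv : ¬ Dominates E root {v} {u})
    (hw : ¬ Dominates E root {w} {u}) : DoubleDom E root u v w :=
  ⟨fun hvw => hw (by rwa [hvw, Set.pair_eq_singleton] at h), h, hv, hw⟩

lemma reflTransGen_of_dominates_pair (hv : ¬ Dominates E root {v} {u})
    (ha : Dominates E root {v, a} {u}) (hab : Dominates E root {v, b} {v, a}) :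
    ReflTransGen E a b := by
  obtain ⟨p, hp, hvp⟩ := exists_isPath_not_mem_of_not_dominates hv
  exact hab.reflTransGen_of_not_mem (by simp) hp ((ha.mem_or_mem rfl hp).resolve_left hvp) hvp

lemma dominates_pair_source_of_reflTransGen (hacyc : Acyclic E) (hw : ¬ Dominates E root {w} {u})
    (hvw : Dominates E root {v, w} {u}) (hv'w : Dominates E root {v', w} {u})
    (hvv' : ReflTransGen E v v') : Dominates E root {v', w} {v} := by
  by_cases hv : v = v'
  · rintro _ rfl p hp
    exact ⟨v', by simp, hv ▸ hp.start_mem⟩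
  obtain ⟨r, hr, hwr⟩ := exists_isPath_not_mem_of_not_dominates hw
  obtain ⟨q, hq, hqr⟩ := hr.exists_prefix ((hvw.mem_or_mem rfl hr).resolve_right hwr)
  refine hv'w.source_of_avoiding_path hq ?_
  rintro _ (rfl | rfl) hq'
  · exact hv (hacyc.eq_of_reflTransGen hvv' (hq.reflTransGen_of_mem hq').2)
  · exact hwr (hqr hq')

lemma dominates_pair_root_of_reflTransGen (hacyc : Acyclic E) (hw : ¬ Dominates E root {w} {u})
    (hvw : Dominates E root {v, w} {u}) (hv'w : Dominates E root {v', w} {u})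
    (hvv' : ReflTransGen E v v') : Dominates E v' {v, w} {u} := by
  by_cases hv : v = v'
  · rintro _ rfl p hp
    exact ⟨v, by simp, hv ▸ hp.end_mem⟩
  obtain ⟨r, hr, hwr⟩ := exists_isPath_not_mem_of_not_dominates hw
  obtain ⟨s, hs, hsr⟩ := hr.exists_suffix_s11 ((hv'w.mem_or_mem rfl hr).resolve_right hwr)
  refine hvw.root_of_avoiding_path hs ?_
  rintro _ (rfl | rfl) hs'
  · exact hv (hacyc.eq_of_reflTransGen hvv' (hs.reflTransGen_of_mem hs').1)
  · exact hwr (hsr hs')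

lemma dominates_pair_root_of_dominates_pair (hacyc : Acyclic E)
    (hv : ¬ Dominates E root {v} {u}) (hx : Dominates E root {v, x} {u})
    (hxw : Dominates E root {v, w} {v, x}) (hne : x ≠ w) : Dominates E w {x, v} {u} := by
  obtain ⟨r, hr, hvr⟩ := exists_isPath_not_mem_of_not_dominates hv
  obtain ⟨s, hs, hsr⟩ := hr.exists_suffix_s11 ((hx.mem_or_mem rfl hr).resolve_left hvr)
  have hws : w ∈ s := (hxw.mem_or_mem (by simp) hs).resolve_left fun hvs => hvr (hsr hvs)
  obtain ⟨t, ht, hts⟩ := hs.exists_suffix_s11 hws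
  refine (Set.pair_comm v x ▸ hx).root_of_avoiding_path ht ?_
  rintro _ (rfl | rfl) ht'
  · exact hne (hacyc.eq_of_reflTransGen (hs.reflTransGen_of_mem hws).1
      (ht.reflTransGen_of_mem ht').1)
  · exact hvr (hsr (hts ht'))

lemma DoubleDom.of_dominates_above (hacyc : Acyclic E) (hvv' : ReflTransGen E v v')
    (ha : DoubleDom E root u v a) (ha' : DoubleDom E root u v' a) (hb : DoubleDom E root u v b)
    (hab : Dominates E root {v, b} {v, a}) : DoubleDom E root u v' b := by
  refine .of_dominates ?_ ha'.2.2.1 hb.2.2.2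
  -- a path from `u` avoiding `v'` and `b` would lead from `a` to `v` and back
  rintro _ rfl p hp
  by_contra! hp'
  have hv'p : v' ∉ p := hp' v' (by simp)
  have hbp : b ∉ p := hp' b (by simp)
  have hap : a ∈ p := (ha'.2.1.mem_or_mem rfl hp).resolve_left hv'p
  have hvp : v ∈ p := (hb.2.1.mem_or_mem rfl hp).resolve_right hbp
  have hav : ReflTransGen E a v :=
    (Set.pair_comm v b ▸ hab).reflTransGen_of_not_mem (by simp) hp hap hbp
  have hvdom : Dominates E root {v', a} {v} :=
    dominates_pair_source_of_reflTransGen hacyc ha.2.2.2 ha.2.1 ha'.2.1 hvv'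
  have hva : ReflTransGen E v a := hvdom.reflTransGen_of_not_mem rfl hp hvp hv'p
  exact ha.1 (hacyc.eq_of_reflTransGen hva hav)

lemma DoubleDom.of_dominates_below (hacyc : Acyclic E) (hvv' : ReflTransGen E v v')
    (hb : DoubleDom E root u v b) (hb' : DoubleDom E root u v' b) (ha' : DoubleDom E root u v' a)
    (hne : a ≠ b) (hab : Dominates E root {v', b} {v', a}) : DoubleDom E root u v a := by
  refine .of_dominates ?_ hb.2.2.1 ha'.2.2.2
  -- a path from `u` avoiding `v` and `a` would lead from `b` to `v'` and back
  intro z hz p hp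
  rw [Set.mem_singleton_iff] at hz
  subst z
  by_contra! hp'
  have hvp : v ∉ p := hp' v (by simp)
  have hap : a ∉ p := hp' a (by simp)
  have hbp : b ∈ p := (hb.2.1.mem_or_mem rfl hp).resolve_left hvp
  have hv'p : v' ∈ p := (ha'.2.1.mem_or_mem rfl hp).resolve_right hap
  have hv'dom : Dominates E v' {v, b} {u} :=
    dominates_pair_root_of_reflTransGen hacyc hb.2.2.2 hb.2.1 hb'.2.1 hvv'
  have hbdom : Dominates E b {a, v'} {u} :=
    dominates_pair_root_of_dominates_pair hacyc hb'.2.2.1 ha'.2.1 hab hne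
  have hbv' : ReflTransGen E b v' := hv'dom.reflTransGen_root_of_not_mem hp hv'p hvp
  have hv'b : ReflTransGen E v' b := hbdom.reflTransGen_root_of_not_mem hp hbp hap
  exact hb'.1 (hacyc.eq_of_reflTransGen hv'b hbv')

lemma reflTransGen_or_reflTransGen_of_doubleDom (hw : DoubleDom E root u v w)
    (hw' : DoubleDom E root u v' w) : ReflTransGen E v v' ∨ ReflTransGen E v' v := by
  obtain ⟨r, hr, hwr⟩ := exists_isPath_not_mem_of_not_dominates hw.2.2.2
  exact hr.reflTransGen_or_reflTransGen ((hw.2.1.mem_or_mem rfl hr).resolve_right hwr)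
    ((hw'.2.1.mem_or_mem rfl hr).resolve_right hwr)

end MatchingSets

section MatchingVectors

variable {root u v v' : V} {L L' : List V}

lemma pairwise_reflTransGen_of_pairwise_dominates (hL : ∀ w ∈ L, DoubleDom E root u v w)
    (hLord : L.Pairwise fun a b => Dominates E root {v, b} {v, a}) :
    L.Pairwise (ReflTransGen E) :=
  hLord.imp_of_mem fun ha _ hab => reflTransGen_of_dominates_pair (hL _ ha).2.2.1 (hL _ ha).2.1 hab

lemma inter_isSuffix_isPrefix_of_reflTransGen (hacyc : Acyclic E) (hvv' : ReflTransGen E v v')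
    (hLnd : L.Nodup) (hL'nd : L'.Nodup)
    (hLmem : ∀ w, w ∈ L ↔ DoubleDom E root u v w)
    (hL'mem : ∀ w, w ∈ L' ↔ DoubleDom E root u v' w)
    (hLord : L.Pairwise fun a b => Dominates E root {v, b} {v, a})
    (hL'ord : L'.Pairwise fun a b => Dominates E root {v', b} {v', a}) :
    ∃ s : List V, (∀ w, w ∈ s ↔ w ∈ L ∧ w ∈ L') ∧ s <:+ L ∧ s <+: L' := by
  classical
  have hsuffix : L.filter (· ∈ L') <:+ L := by
    refine List.filter_isSuffix_of_pairwise (hLord.imp_of_mem fun ha hb hab ha' => ?_)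
    simp only [decide_eq_true_eq, hLmem, hL'mem] at ha hb ha' ⊢
    exact .of_dominates_above hacyc hvv' ha ha' hb hab
  have hprefix : L'.filter (· ∈ L) <+: L' := by
    refine List.filter_isPrefix_of_pairwise
      ((hL'nd.and hL'ord).imp_of_mem fun ha' hb' hab hb => ?_)
    simp only [decide_eq_true_eq, hLmem, hL'mem] at ha' hb' hb ⊢
    exact .of_dominates_below hacyc hvv' hb hb' ha' hab.1 hab.2
  have heq : L.filter (· ∈ L') = L'.filter (· ∈ L) := by
    refine List.Perm.eq_of_pairwise (fun a b _ _ hab hba => hacyc.eq_of_reflTransGen hab hba)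
      ((pairwise_reflTransGen_of_pairwise_dominates (fun w => (hLmem w).1) hLord).filter _)
      ((pairwise_reflTransGen_of_pairwise_dominates (fun w => (hL'mem w).1) hL'ord).filter _)
      ((List.perm_ext_iff_of_nodup (hLnd.filter _) (hL'nd.filter _)).mpr fun w => ?_)
    simp [and_comm]
  exact ⟨_, fun w => by simp, hsuffix, heq ▸ hprefix⟩

end MatchingVectors

end

theorem matching_vectors_overlap_general {V : Type*} (E : V → V → Prop) (root : V)
    (hacyc : Acyclic E) (u v v' : V) (L L' : List V)
    (hLnd : L.Nodup) (hL'nd : L'.Nodup)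
    (hLmem : ∀ w, w ∈ L ↔ DoubleDom E root u v w)
    (hL'mem : ∀ w, w ∈ L' ↔ DoubleDom E root u v' w)
    (hLord : L.Pairwise (fun a b => Dominates E root {v, b} {v, a}))
    (hL'ord : L'.Pairwise (fun a b => Dominates E root {v', b} {v', a})) :
    ∃ s : List V, (∀ w, w ∈ s ↔ w ∈ L ∧ w ∈ L') ∧
      ((s <:+ L ∧ s <+: L') ∨ (s <:+ L' ∧ s <+: L)) := by
  by_cases hmeet : ∃ w, w ∈ L ∧ w ∈ L'
  · obtain ⟨w, hwL, hwL'⟩ := hmeet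
    rcases reflTransGen_or_reflTransGen_of_doubleDom ((hLmem w).1 hwL) ((hL'mem w).1 hwL')
      with hvv' | hv'v
    · obtain ⟨s, hs, hsuf, hpre⟩ := inter_isSuffix_isPrefix_of_reflTransGen hacyc hvv'
        hLnd hL'nd hLmem hL'mem hLord hL'ord
      exact ⟨s, hs, .inl ⟨hsuf, hpre⟩⟩
    · obtain ⟨s, hs, hsuf, hpre⟩ := inter_isSuffix_isPrefix_of_reflTransGen hacyc hv'v
        hL'nd hLnd hL'mem hLmem hL'ord hLord
      exact ⟨s, fun w => (hs w).trans and_comm, .inr ⟨hsuf, hpre⟩⟩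
  · exact ⟨[], fun w => ⟨by simp, fun hw => (hmeet ⟨w, hw⟩).elim⟩,
      .inl ⟨List.nil_suffix, List.nil_prefix⟩⟩

theorem matching_vectors_overlap {V : Type*} [Fintype V] (E : V → V → Prop) (root : V)
    (hacyc : Acyclic E) (u v v' : V) (L L' : List V)
    (hLnd : L.Nodup) (hL'nd : L'.Nodup)
    (hLmem : ∀ w, w ∈ L ↔ DoubleDom E root u v w)
    (hL'mem : ∀ w, w ∈ L' ↔ DoubleDom E root u v' w)
    (hLord : L.Pairwise (fun a b => Dominates E root {v, b} {v, a}))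
    (hL'ord : L'.Pairwise (fun a b => Dominates E root {v', b} {v', a})) :
    ∃ s : List V, (∀ w, w ∈ s ↔ w ∈ L ∧ w ∈ L') ∧
      ((s <:+ L ∧ s <+: L') ∨ (s <:+ L' ∧ s <+: L)) :=
  matching_vectors_overlap_general E root hacyc u v v' L L' hLnd hL'nd hLmem hL'mem hLord hL'ord
end

section
/- If there exist two directed paths P1 and P2 from u to root that are internally vertex-disjoint (sharing only u and root), then for every double-vertex dominator {v, w} of u, one of v, w lies on P1 and the other lies on P2. -/
theorem doubleDom_on_disjoint_paths {V : Type*} [Fintype V] (E : V → V → Prop) (root : V)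
    (hacyc : Acyclic E) (u : V) (p₁ p₂ : List V)
    (h₁ : IsPath E p₁ u root) (h₂ : IsPath E p₂ u root)
    (hdisj : ∀ x, x ∈ p₁ → x ∈ p₂ → x = u ∨ x = root)
    (v w : V) (hvw : DoubleDom E root u v w) :
    (v ∈ p₁ ∧ w ∈ p₂) ∨ (v ∈ p₂ ∧ w ∈ p₁) := by
  obtain ⟨hne, hdom, hnv, hnw⟩ := hvw
  have hstart : ∀ (q : List V) (a b : V), IsPath E q a b → a ∈ q ∧ b ∈ q := by
    rintro q a b ⟨hqne, hh, hl, _⟩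
    constructor
    · exact List.mem_of_mem_head? (by simp [hh])
    · exact List.mem_of_mem_getLast? (by simp [hl])
  have hsingle : ∀ x : V, (x = u ∨ x = root) → Dominates E root {x} {u} := by
    intro x hx b hb q hq
    refine ⟨x, rfl, ?_⟩
    have hb' : b = u := hb
    subst hb'
    rcases hx with rfl | rfl
    · exact (hstart q _ _ hq).1
    · exact (hstart q _ _ hq).2
  have key : ∀ x : V, x ∈ p₁ → x ∈ p₂ → Dominates E root {x} {u} :=
    fun x hx1 hx2 => hsingle x (hdisj x hx1 hx2)
  obtain ⟨a1, ha1, ha1p⟩ := hdom u rfl p₁ h₁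
  obtain ⟨a2, ha2, ha2p⟩ := hdom u rfl p₂ h₂
  rcases ha1 with h1 | h1 <;> rcases ha2 with h2 | h2
  · exact absurd (key v (h1 ▸ ha1p) (h2 ▸ ha2p)) hnv
  · exact Or.inl ⟨h1 ▸ ha1p, h2 ▸ ha2p⟩
  · exact Or.inr ⟨h2 ▸ ha2p, h1 ▸ ha1p⟩
  · exact absurd (key w (h1 ▸ ha1p) (h2 ▸ ha2p)) hnw
end

section
/- If every path from u to root containing vertex v also contains vertex w (with v, w, u, root distinct), then for any double-vertex dominator {v, x} of u, the pair {w, x} also dominates u; moreover if neither w nor x alone dominates u, then {w, x} is a double-vertex dominator of u. -/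
theorem doubleDom_substitution {V : Type*} [Fintype V] (E : V → V → Prop) (root : V)
    (hacyc : Acyclic E) (u v w x : V)
    (hdist : v ≠ w ∧ v ≠ u ∧ v ≠ root ∧ w ≠ u ∧ w ≠ root ∧ u ≠ root)
    (hsub : ∀ p : List V, IsPath E p u root → v ∈ p → w ∈ p)
    (hvx : DoubleDom E root u v x) :
    Dominates E root {w, x} {u} ∧
      (¬ Dominates E root {w} {u} → ¬ Dominates E root {x} {u} →
        DoubleDom E root u w x) := by
  obtain ⟨hvx_ne, hdom, hnv, hnx⟩ := hvx
  have hwx : Dominates E root {w, x} {u} := by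
    intro b hb p hp
    rcases hdom b hb p hp with ⟨a, ha, hap⟩
    rcases ha with rfl | rfl
    · exact ⟨w, Or.inl rfl, hsub p (hb ▸ hp) hap⟩
    · exact ⟨a, Or.inr rfl, hap⟩
  refine ⟨hwx, fun hnw hnx' => ⟨?_, hwx, hnw, hnx'⟩⟩
  rintro rfl
  apply hnw
  intro b hb p hp
  rcases hwx b hb p hp with ⟨a, ha, hap⟩
  rcases ha with rfl | rfl <;> exact ⟨a, rfl, hap⟩
end
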